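/- Fix r ≥ 1 and an index i ∈ {1, ..., r}. If d = (d_1, ..., d_r) ∈ (ℤ_{≥0})^r satisfies d_i - (d_1 + ... + d_r) - Σ_{j=1}^{r+1} (d_j - d_{j-1})²/2 ≥ 0 (with d_0 = d_{r+1} = 0), then d = 0. -/

import Mathlib

/-!
Every `d_j` is nonnegative, so `d_i` is at most `d_1 + ⋯ + d_r`, and the hypothesis forces the sum
of the squared increments `(d_j - d_{j-1})²` to vanish. Hence `j ↦ d_j` is constant on
`0, …, r + 1`, and it vanishes since `d_0 = 0`.
-/

/-- Extend a tuple `d ∈ (ℤ_{≥0})^r` to indices `0, 1, ..., r+1` (valued in `ℚ`),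
with the conventions `d_0 = d_{r+1} = 0`. -/
def extQ (r : ℕ) (d : Fin r → ℕ) : ℕ → ℚ :=
  fun i => if h : 1 ≤ i ∧ i ≤ r then (d ⟨i - 1, by omega⟩ : ℚ) else 0

open Finset

theorem eq_of_sum_sq_sub_eq_zero {α : Type*} [Ring α] [LinearOrder α] [IsStrictOrderedRing α]
    {f : ℕ → α} {n : ℕ} (h : ∑ j ∈ Icc 1 n, (f j - f (j - 1)) ^ 2 = 0) :
    ∀ j ≤ n, f j = f 0 := by
  have hstep : ∀ j ∈ Icc 1 n, f j = f (j - 1) := fun j hj =>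
    sub_eq_zero.mp <| pow_eq_zero_iff two_ne_zero |>.mp <|
      (sum_eq_zero_iff_of_nonneg fun _ _ => sq_nonneg _).mp h j hj
  intro j hj
  induction j with
  | zero => rfl
  | succ k ih => rw [hstep (k + 1) (by simp; omega), Nat.add_sub_cancel, ih (by omega)]

section extQ

variable {r : ℕ} {d : Fin r → ℕ}

@[simp]
theorem extQ_zero : extQ r d 0 = 0 := by
  simp [extQ]

@[simp]
theorem extQ_succ (k : Fin r) : extQ r d (k + 1) = d k := by
  simp [extQ, Nat.succ_le_of_lt k.isLt]

theorem extQ_nonneg (j : ℕ) : 0 ≤ extQ r d j := by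
  unfold extQ
  split <;> positivity

theorem extQ_le_sum (j : ℕ) : extQ r d j ≤ ∑ k ∈ Icc 1 r, extQ r d k := by
  by_cases hj : j ∈ Icc 1 r
  · exact single_le_sum (fun k _ => extQ_nonneg k) hj
  · have hzero : extQ r d j = 0 := dif_neg (by simpa using hj)
    exact hzero ▸ sum_nonneg fun k _ => extQ_nonneg k

end extQ

theorem superlevel_single_index_forces_zero_general (r : ℕ)
    (i : ℕ) (d : Fin r → ℕ)
    (h : 0 ≤ extQ r d i - (∑ j ∈ Finset.Icc 1 r, extQ r d j)
        - (∑ j ∈ Finset.Icc 1 (r + 1), (extQ r d j - extQ r d (j - 1)) ^ 2) / 2) :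
    d = 0 := by
  have hsq_le : ∑ j ∈ Icc 1 (r + 1), (extQ r d j - extQ r d (j - 1)) ^ 2 ≤ 0 := by
    linarith [extQ_le_sum (d := d) i]
  have hconst := eq_of_sum_sq_sub_eq_zero <|
    le_antisymm hsq_le (sum_nonneg fun _ _ => sq_nonneg _)
  funext k
  have hk := hconst (k + 1) (by omega)
  rw [extQ_succ, extQ_zero] at hk
  exact_mod_cast hk

/-- Fix `r ≥ 1` and an index `i ∈ {1, ..., r}`.  If `d ∈ (ℤ_{≥0})^r` satisfies
`d_i - (d_1 + ⋯ + d_r) - ∑_{j=1}^{r+1} (d_j - d_{j-1})²/2 ≥ 0`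
(with `d_0 = d_{r+1} = 0`), then `d = 0`. -/
theorem superlevel_single_index_forces_zero (r : ℕ) (hr : 1 ≤ r)
    (i : ℕ) (hi : i ∈ Finset.Icc 1 r) (d : Fin r → ℕ)
    (h : 0 ≤ extQ r d i - (∑ j ∈ Finset.Icc 1 r, extQ r d j)
        - (∑ j ∈ Finset.Icc 1 (r + 1), (extQ r d j - extQ r d (j - 1)) ^ 2) / 2) :
    d = 0 :=
  superlevel_single_index_forces_zero_general r i d h
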